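/- arXiv:2103.10227 — 2 statements merged into one kernel-verified Lean document; each statement's English description precedes it below -/
import Mathlib

section
/- Let X₁(t) and X₂(t) be the α-dissipative solutions of the Lagrangian system with initial data X₁(0), X₂(0) ∈ F. Then for every t ≥ 0, ‖U₁(·,t) − U₂(·,t)‖_{L∞(ℝ)} ≤ ‖U₁(·,0) − U₂(·,0)‖_{L∞(ℝ)} + (1/4)·∫₀^{t} ‖G₁₂(·,s)‖_{L¹(ℝ)} ds. -/
open MeasureTheory Filter Set Real
open scoped ENNReal Classical

noncomputable section

/-- A Lagrangian quadruple `X = (y, U, H, V)` of real-valued functions on `ℝ`. -/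
structure LagQuad where
  y : ℝ → ℝ
  U : ℝ → ℝ
  H : ℝ → ℝ
  V : ℝ → ℝ

/-- The real-valued `L^p` norm of a function `ℝ → ℝ` (Lebesgue measure). -/
def nrm (p : ℝ≥0∞) (f : ℝ → ℝ) : ℝ := (eLpNorm f p volume).toReal

/-- `f` is bounded and Lipschitz. -/
def bddLip (f : ℝ → ℝ) : Prop := (∃ C, ∀ x, |f x| ≤ C) ∧ (∃ K, LipschitzWith K f)

/-- The set `F` of Lagrangian coordinates, for the dissipation parameter `α`. -/
def inF (α : ℝ) (X : LagQuad) : Prop :=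
  bddLip (fun ξ => X.y ξ - ξ) ∧ bddLip X.U ∧ bddLip X.H ∧ bddLip X.V ∧
  (∀ᵐ (ξ : ℝ) ∂volume, 0 ≤ deriv X.y ξ) ∧ (∀ᵐ (ξ : ℝ) ∂volume, 0 ≤ deriv X.H ξ) ∧
  (∃ c > (0 : ℝ), ∀ᵐ (ξ : ℝ) ∂volume, c ≤ deriv X.y ξ + deriv X.H ξ) ∧
  (∀ᵐ (ξ : ℝ) ∂volume, deriv X.y ξ * deriv X.V ξ = (deriv X.U ξ) ^ 2) ∧
  (∀ᵐ (ξ : ℝ) ∂volume, 0 ≤ deriv X.V ξ ∧ deriv X.V ξ ≤ deriv X.H ξ) ∧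
  (α = 1 → ∀ᵐ (ξ : ℝ) ∂volume,
    (deriv X.y ξ = 0 → deriv X.V ξ = 0) ∧ (0 < deriv X.y ξ → deriv X.V ξ = deriv X.H ξ)) ∧
  (α < 1 → ∃ κ : ℝ → ℝ, (∀ ξ, κ ξ = 1 - α ∨ κ ξ = 1) ∧
    (∀ᵐ (ξ : ℝ) ∂volume, deriv X.V ξ = κ ξ * deriv X.H ξ ∧ (deriv X.U ξ < 0 → κ ξ = 1)))

/-- The subset `F₀ = {X ∈ F : y + H = id}`. -/
def inF0 (α : ℝ) (X : LagQuad) : Prop := inF α X ∧ ∀ ξ, X.y ξ + X.H ξ = ξ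

/-- The wave-breaking time `τ` of a Lagrangian quadruple. -/
def tauOf (X : LagQuad) (ξ : ℝ) : ℝ≥0∞ :=
  if deriv X.U ξ < 0 then ENNReal.ofReal (-2 * deriv X.y ξ / deriv X.U ξ)
  else if deriv X.U ξ = 0 ∧ deriv X.y ξ = 0 then 0
  else ⊤

/-- `A = {ξ : U'(ξ) ≥ 0}`. -/
def Aset (X : LagQuad) : Set ℝ := {ξ | 0 ≤ deriv X.U ξ}

/-- `Ω(t) = (A₁ ∩ A₂) ∪ {ξ : t < τ₁(ξ) = τ₂(ξ) < ∞}`. -/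
def OmegaT (τ₁ τ₂ : ℝ → ℝ≥0∞) (t : ℝ) (X₁ X₂ : LagQuad) : Set ℝ :=
  (Aset X₁ ∩ Aset X₂) ∪ {ξ | ENNReal.ofReal t < τ₁ ξ ∧ τ₁ ξ = τ₂ ξ ∧ τ₂ ξ < ⊤}

/-- `G₁₂ = |V₁' − V₂'|·1_Ω + max(V₁',V₂')·1_{Ωᶜ}`. -/
def GfunT (τ₁ τ₂ : ℝ → ℝ≥0∞) (t : ℝ) (X₁ X₂ : LagQuad) (ξ : ℝ) : ℝ :=
  (OmegaT τ₁ τ₂ t X₁ X₂).indicator (fun η => |deriv X₁.V η - deriv X₂.V η|) ξ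
    + ((OmegaT τ₁ τ₂ t X₁ X₂)ᶜ).indicator (fun η => max (deriv X₁.V η) (deriv X₂.V η)) ξ

/-- The Lagrangian distance, with wave-breaking times `τ₁, τ₂` and time parameter `t`. -/
def ddT (τ₁ τ₂ : ℝ → ℝ≥0∞) (t : ℝ) (X₁ X₂ : LagQuad) : ℝ :=
  nrm ⊤ (fun ξ => X₁.y ξ - X₂.y ξ) + nrm ⊤ (fun ξ => X₁.U ξ - X₂.U ξ)
    + nrm 2 (fun ξ => deriv X₁.y ξ - deriv X₂.y ξ)
    + nrm 2 (fun ξ => deriv X₁.U ξ - deriv X₂.U ξ)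
    + nrm ⊤ (fun ξ => X₁.H ξ - X₂.H ξ)
    + nrm 1 (GfunT τ₁ τ₂ t X₁ X₂) + nrm 2 (GfunT τ₁ τ₂ t X₁ X₂)

/-- The metric `d` on `F`. -/
def dmet (X₁ X₂ : LagQuad) : ℝ := ddT (tauOf X₁) (tauOf X₂) 0 X₁ X₂

/-- The norm `‖X_A − X_B‖` (sum of the four sup-norms). -/
def xnorm (XA XB : LagQuad) : ℝ :=
  nrm ⊤ (fun ξ => XA.y ξ - XB.y ξ) + nrm ⊤ (fun ξ => XA.U ξ - XB.U ξ)
    + nrm ⊤ (fun ξ => XA.H ξ - XB.H ξ) + nrm ⊤ (fun ξ => XA.V ξ - XB.V ξ)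

/-- The relabelling group `G`. -/
def inG (f : ℝ → ℝ) : Prop :=
  Function.Bijective f ∧ bddLip (fun x => f x - x) ∧
    bddLip (fun x => Function.invFun f x - x) ∧
    MemLp (fun x => deriv f x - 1) 2 volume

/-- The relabelling action `X • f`. -/
def act (X : LagQuad) (f : ℝ → ℝ) : LagQuad :=
  ⟨fun ξ => X.y (f ξ), fun ξ => X.U (f ξ), fun ξ => X.H (f ξ), fun ξ => X.V (f ξ)⟩

/-- `Π(X) = X • (y + H)⁻¹`. -/
def PiMap (X : LagQuad) : LagQuad := act X (Function.invFun (fun ξ => X.y ξ + X.H ξ))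

/-- `J(X_A, X_B) = inf_{f,g ∈ G} ( d(X_A, X_B•f) + d(X_A•g, X_B) )`. -/
def Jmet (XA XB : LagQuad) : ℝ :=
  sInf {r | ∃ f g, inG f ∧ inG g ∧ r = dmet XA (act XB f) + dmet (act XA g) XB}

/-- `d_F`, the infimum over finite sequences in `F₀` joining `Π X_A` to `Π X_B`. -/
def dFmet (α : ℝ) (XA XB : LagQuad) : ℝ :=
  sInf {r | ∃ (N : ℕ) (Xs : ℕ → LagQuad), (∀ n ≤ N, inF0 α (Xs n)) ∧
    Xs 0 = PiMap XA ∧ Xs N = PiMap XB ∧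
    r = ∑ n ∈ Finset.range N, Jmet (Xs (n + 1)) (Xs n)}

/-- The set of points that have experienced wave breaking by time `t`. -/
def breakSet (X0 : LagQuad) (t : ℝ) : Set ℝ :=
  {η | 0 < tauOf X0 η ∧ tauOf X0 η ≤ ENNReal.ofReal t}

/-- `V(ξ,t) = ∫_{−∞}^ξ V₀'(η)(1 − α·1_{t ≥ τ(η) > 0}(η)) dη`. -/
def Vsol (α : ℝ) (X0 : LagQuad) (t : ℝ) (ξ : ℝ) : ℝ :=
  ∫ η in Set.Iio ξ,
    deriv X0.V η * (1 - α * (breakSet X0 t).indicator (fun _ => (1 : ℝ)) η)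

/-- `U(ξ,t) = U₀(ξ) + ∫₀ᵗ (½ V(ξ,s) − ¼ V_∞(s)) ds`. -/
def Usol (α : ℝ) (X0 : LagQuad) (t : ℝ) (ξ : ℝ) : ℝ :=
  X0.U ξ + ∫ s in (0:ℝ)..t,
    ((1 / 2) * Vsol α X0 s ξ - (1 / 4) * limUnder Filter.atTop (Vsol α X0 s))

/-- `y(ξ,t) = y₀(ξ) + ∫₀ᵗ U(ξ,s) ds`. -/
def ysol (α : ℝ) (X0 : LagQuad) (t : ℝ) (ξ : ℝ) : ℝ :=
  X0.y ξ + ∫ s in (0:ℝ)..t, Usol α X0 s ξ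

/-- The α-dissipative solution of the Lagrangian system at time `t`. -/
def sol (α : ℝ) (X0 : LagQuad) (t : ℝ) : LagQuad :=
  ⟨ysol α X0 t, Usol α X0 t, X0.H, Vsol α X0 t⟩

/-- The Eulerian velocity `u` of `M(X)`: `u(x) = U(ξ)` whenever `x = y(ξ)`. -/
def Mu (X : LagQuad) : ℝ → ℝ := fun x => X.U (Function.invFun X.y x)

/-- The Eulerian energy measure `μ = y_#(V' dξ)` of `M(X)`. -/
def Mmu (X : LagQuad) : Measure ℝ :=
  Measure.map X.y (volume.withDensity fun ξ => ENNReal.ofReal (deriv X.V ξ))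

/-- The Eulerian past-energy measure `ν = y_#(H' dξ)` of `M(X)`. -/
def Mnu (X : LagQuad) : Measure ℝ :=
  Measure.map X.y (volume.withDensity fun ξ => ENNReal.ofReal (deriv X.H ξ))

/-- The set `D` of Eulerian coordinates `(u, μ, ν)`. -/
def inD (α : ℝ) (u : ℝ → ℝ) (μ ν : Measure ℝ) : Prop :=
  (∃ C, ∀ x, |u x| ≤ C) ∧
  (∀ x y : ℝ, u y - u x = ∫ s in x..y, deriv u s) ∧
  MemLp (deriv u) 2 volume ∧
  IsFiniteMeasure μ ∧ IsFiniteMeasure ν ∧ μ ≤ ν ∧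
  (μ.rnDeriv volume =ᵐ[volume] fun x => ENNReal.ofReal ((deriv u x) ^ 2)) ∧
  (α = 1 → μ = volume.withDensity (fun x => ENNReal.ofReal ((deriv u x) ^ 2)) ∧
    ν.rnDeriv volume =ᵐ[volume] fun x => ENNReal.ofReal ((deriv u x) ^ 2)) ∧
  (α < 1 → ∃ k : ℝ → ℝ, (∀ x, k x = 1 ∨ k x = 1 - α) ∧
    (∀ x, deriv u x < 0 → k x = 1) ∧ μ = ν.withDensity (fun x => ENNReal.ofReal (k x)))

/-- `y(ξ) = sup { x : x + ν((−∞,x)) < ξ }` — the Lagrangian characteristic of `(u,μ,ν)`. -/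
def yL (ν : Measure ℝ) (ξ : ℝ) : ℝ := sSup {x : ℝ | x + (ν (Set.Iio x)).toReal < ξ}

/-- The mapping `L : D → F₀` from Eulerian to Lagrangian coordinates. -/
def Lmap (u : ℝ → ℝ) (μ ν : Measure ℝ) : LagQuad :=
  ⟨yL ν, fun ξ => u (yL ν ξ), fun ξ => ξ - yL ν ξ,
    fun ξ => ∫ η in Set.Iio ξ,
      deriv (fun ζ => ζ - yL ν ζ) η * (μ.rnDeriv ν (yL ν η)).toReal⟩

/-- The set `D_{0,M}` of Eulerian pairs `(u, μ)` with total energy at most `M`. -/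
def inD0M (α M : ℝ) (u : ℝ → ℝ) (μ : Measure ℝ) : Prop :=
  (∃ C, ∀ x, |u x| ≤ C) ∧
  (∀ x y : ℝ, u y - u x = ∫ s in x..y, deriv u s) ∧
  MemLp (deriv u) 2 volume ∧
  IsFiniteMeasure μ ∧
  (μ.rnDeriv volume =ᵐ[volume] fun x => ENNReal.ofReal ((deriv u x) ^ 2)) ∧
  (μ Set.univ).toReal ≤ M ∧
  (α = 1 → μ = volume.withDensity (fun x => ENNReal.ofReal ((deriv u x) ^ 2)))

/-- `J_D((u₁,μ₁),(u₂,μ₂)) = inf over admissible ν₁, ν₂ of d_D((u₁,μ₁,ν₁),(u₂,μ₂,ν₂))`. -/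
def JD (α : ℝ) (u₁ : ℝ → ℝ) (μ₁ : Measure ℝ) (u₂ : ℝ → ℝ) (μ₂ : Measure ℝ) : ℝ :=
  sInf {r | ∃ ν₁ ν₂ : Measure ℝ, inD α u₁ μ₁ ν₁ ∧ inD α u₂ μ₂ ν₂ ∧
    r = dFmet α (Lmap u₁ μ₁ ν₁) (Lmap u₂ μ₂ ν₂)}

/-- The Eulerian metric `d_M` on `D_{0,M}`. -/
def dMmet (α M : ℝ) (uA : ℝ → ℝ) (μA : Measure ℝ) (uB : ℝ → ℝ) (μB : Measure ℝ) : ℝ :=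
  sInf {r | ∃ (N : ℕ) (us : ℕ → ℝ → ℝ) (μs : ℕ → Measure ℝ),
    (∀ n ≤ N, inD0M α M (us n) (μs n)) ∧
    us 0 = uA ∧ μs 0 = μA ∧ us N = uB ∧ μs N = μB ∧
    r = ∑ n ∈ Finset.range N, JD α (us (n + 1)) (μs (n + 1)) (us n) (μs n)}

end

/-! Each rate `∂ₜU = ½V − ¼V_∞` is, at time `s`, `½∫_{η<ξ} g − ¼∫ g` for the density
`g = V₀'·(1 − α·1_{broken by s})` of `V(·,s)`, so two rates differ by at most `¼∫|g₁ − g₂|`.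
As `g₁, g₂ ≥ 0`, also `|g₁ − g₂| ≤ max(g₁, g₂)`, and since `∂_ξVᵢ = gᵢ` a.e. this makes
`|g₁ − g₂| ≤ G₁₂(·,s)` a.e. Integrating in time gives the estimate. The time integrand
`s ↦ ‖G₁₂(·,s)‖_{L¹}` is measurable (so its integral is not the junk value `0`) because `U` is
jointly continuous, which makes `∂_ξU`, hence `Ω₁₂` and `G₁₂`, jointly measurable. -/

open scoped NNReal Topology

theorem LipschitzWith.integrable_deriv_of_bounded_of_ae_deriv_nonneg {K : ℝ≥0} {C : ℝ}
    {f : ℝ → ℝ} (hf : LipschitzWith K f) (hC : ∀ x, |f x| ≤ C)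
    (h0 : ∀ᵐ x, 0 ≤ deriv f x) : Integrable (deriv f) := by
  have hac (a b : ℝ) : AbsolutelyContinuousOnInterval f a b :=
    (hf.lipschitzOnWith (s := uIcc a b)).absolutelyContinuousOnInterval
  refine integrable_of_intervalIntegral_norm_bounded (2 * C)
    (fun n : ℕ => (hac (-n) n).intervalIntegrable_deriv.1)
    (tendsto_neg_atTop_atBot.comp tendsto_natCast_atTop_atTop) tendsto_natCast_atTop_atTop
    (Eventually.of_forall fun n => ?_)
  have hnorm : ∫ x in -(n : ℝ)..n, ‖deriv f x‖ = ∫ x in -(n : ℝ)..n, deriv f x :=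
    intervalIntegral.integral_congr_ae <| by
      filter_upwards [h0] with x hx _ using Real.norm_of_nonneg hx
  rw [hnorm, (hac _ _).integral_deriv_eq_sub]
  linarith [(abs_le.1 (hC n)).2, (abs_le.1 (hC (-n))).1]

section Primitive

variable {g : ℝ → ℝ}

theorem MeasureTheory.Integrable.integral_Iio_eq_add (hg : Integrable g) (ξ : ℝ) :
    ∫ η in Iio ξ, g η = (∫ η in Iio 0, g η) + ∫ η in 0..ξ, g η :=
  eq_add_of_sub_eq' (intervalIntegral.integral_Iio_sub_Iio' (a := 0) (b := ξ) hg.integrableOn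
    hg.integrableOn)

theorem MeasureTheory.Integrable.continuous_integral_Iio (hg : Integrable g) :
    Continuous fun ξ => ∫ η in Iio ξ, g η := by
  rw [funext hg.integral_Iio_eq_add]
  exact continuous_const.add (hg.continuous_primitive 0)

theorem MeasureTheory.Integrable.ae_hasDerivAt_integral_Iio (hg : Integrable g) :
    ∀ᵐ x, HasDerivAt (fun ξ => ∫ η in Iio ξ, g η) (g x) x := by
  filter_upwards [LocallyIntegrable.ae_hasDerivAt_integral hg.locallyIntegrable] with x hx
  rw [funext hg.integral_Iio_eq_add]
  exact (hx 0).const_add (∫ η in Iio 0, g η)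

theorem MeasureTheory.Integrable.tendsto_integral_Iio_atTop (hg : Integrable g) :
    Tendsto (fun ξ => ∫ η in Iio ξ, g η) atTop (𝓝 (∫ η, g η)) :=
  (aecover_Iio tendsto_id).integral_tendsto_of_countably_generated hg

theorem MeasureTheory.Integrable.abs_half_integral_Iio_sub_quarter_integral_le
    (hg : Integrable g) (ξ : ℝ) :
    |(1 / 2) * (∫ η in Iio ξ, g η) - (1 / 4) * ∫ η, g η| ≤ (1 / 4) * ∫ η, |g η| := by
  have hsplit := integral_add_compl (measurableSet_Iio (a := ξ)) hg
  have hsplit_abs := integral_add_compl (measurableSet_Iio (a := ξ)) hg.abs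
  have hleft := abs_integral_le_integral_abs (f := g) (μ := volume.restrict (Iio ξ))
  have hright := abs_integral_le_integral_abs (f := g) (μ := volume.restrict (Iio ξ)ᶜ)
  -- `½ A - ¼ (A + B) = ¼ (A - B)` with `A, B` the integrals over `Iio ξ` and its complement
  rw [← hsplit, ← hsplit_abs]
  rw [abs_le] at hleft hright ⊢
  constructor <;> linarith

end Primitive

theorem nrm_top_le_add_of_abs_sub_le {f g : ℝ → ℝ} {R : ℝ}
    (hg : ∃ C, ∀ ξ, |g ξ| ≤ C)
    (h : ∀ ξ, |f ξ - g ξ| ≤ R) : nrm ⊤ f ≤ nrm ⊤ g + R := by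
  obtain ⟨C, hC⟩ := hg
  have hg_fin : eLpNorm g ⊤ volume ≠ ⊤ := by
    refine ne_top_of_le_ne_top (ENNReal.ofReal_ne_top (r := C)) ?_
    rw [eLpNorm_exponent_top]
    exact eLpNormEssSup_le_of_ae_bound (Eventually.of_forall hC)
  have hR : 0 ≤ R := (abs_nonneg _).trans (h 0)
  have hf_ae : ∀ᵐ ξ, ‖f ξ‖ ≤ nrm ⊤ g + R := by
    filter_upwards [ae_le_eLpNormEssSup (f := g) (μ := volume)] with ξ hξ
    have hgξ : |g ξ| ≤ nrm ⊤ g := by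
      simpa [nrm, eLpNorm_exponent_top] using ENNReal.toReal_mono (by simpa using hg_fin) hξ
    have hfg := abs_sub_abs_le_abs_sub (f ξ) (g ξ)
    rw [Real.norm_eq_abs]
    linarith [h ξ]
  refine ENNReal.toReal_le_of_le_ofReal (add_nonneg ENNReal.toReal_nonneg hR) ?_
  rw [eLpNorm_exponent_top]
  exact eLpNormEssSup_le_of_ae_bound hf_ae

theorem measurable_tauOf (X : LagQuad) : Measurable (tauOf X) := by
  unfold tauOf
  refine Measurable.ite (measurableSet_lt (measurable_deriv _) measurable_const) ?_ ?_
  · exact ENNReal.measurable_ofReal.comp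
      (((measurable_deriv _).const_mul _).div (measurable_deriv _))
  · exact Measurable.ite ((measurableSet_eq_fun (measurable_deriv _) measurable_const).inter
      (measurableSet_eq_fun (measurable_deriv _) measurable_const)) measurable_const
      measurable_const

theorem one_sub_mul_indicator_mem_Icc {α : ℝ} (hα : α ∈ Icc (0 : ℝ) 1) (S : Set ℝ)
    (η : ℝ) :
    1 - α * S.indicator (fun _ => (1 : ℝ)) η ∈ Icc (0 : ℝ) 1 := by
  by_cases hη : η ∈ S <;> simp [hη, hα.1, hα.2]

section Solution

variable {α : ℝ} {X : LagQuad}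

noncomputable def vDensity (α : ℝ) (X : LagQuad) (s η : ℝ) : ℝ :=
  deriv X.V η * (1 - α * (breakSet X s).indicator (fun _ => (1 : ℝ)) η)

theorem measurable_vDensity (α : ℝ) (X : LagQuad) :
    Measurable fun p : ℝ × ℝ => vDensity α X p.1 p.2 := by
  have hbreak : MeasurableSet {p : ℝ × ℝ | p.2 ∈ breakSet X p.1} :=
    (measurableSet_lt measurable_const ((measurable_tauOf X).comp measurable_snd)).inter
      (measurableSet_le ((measurable_tauOf X).comp measurable_snd)
        (ENNReal.measurable_ofReal.comp measurable_fst))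
  exact ((measurable_deriv _).comp measurable_snd).mul
    (measurable_const.sub (measurable_const.mul (measurable_const.indicator hbreak)))

theorem abs_vDensity_le (hα : α ∈ Icc (0 : ℝ) 1) (X : LagQuad) (s η : ℝ) :
    |vDensity α X s η| ≤ |deriv X.V η| := by
  obtain ⟨h0, h1⟩ := one_sub_mul_indicator_mem_Icc hα (breakSet X s) η
  rw [vDensity, abs_mul, abs_of_nonneg h0]
  exact mul_le_of_le_one_right (abs_nonneg _) h1

theorem ae_deriv_V_nonneg (hX : inF α X) : ∀ᵐ η, 0 ≤ deriv X.V η := by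
  obtain ⟨-, -, -, -, -, -, -, -, hV, -⟩ := hX
  exact hV.mono fun _ h => h.1

theorem vDensity_nonneg (hα : α ∈ Icc (0 : ℝ) 1) (hX : inF α X) (s : ℝ) :
    ∀ᵐ η, 0 ≤ vDensity α X s η := by
  filter_upwards [ae_deriv_V_nonneg hX] with η hη
  exact mul_nonneg hη (one_sub_mul_indicator_mem_Icc hα (breakSet X s) η).1

theorem integrable_deriv_V (hX : inF α X) : Integrable (deriv X.V) := by
  have hV0 := ae_deriv_V_nonneg hX
  obtain ⟨-, -, -, ⟨⟨C, hC⟩, K, hK⟩, -⟩ := hX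
  exact hK.integrable_deriv_of_bounded_of_ae_deriv_nonneg hC hV0

theorem integrable_vDensity (hα : α ∈ Icc (0 : ℝ) 1) (hX : inF α X) (s : ℝ) :
    Integrable (vDensity α X s) :=
  (integrable_deriv_V hX).abs.mono'
    ((measurable_vDensity α X).comp measurable_prodMk_left).aestronglyMeasurable
    (Eventually.of_forall (abs_vDensity_le hα X s))

theorem abs_setIntegral_vDensity_le (hα : α ∈ Icc (0 : ℝ) 1) (hX : inF α X) (s : ℝ)
    (S : Set ℝ) : |∫ η in S, vDensity α X s η| ≤ ∫ η, |deriv X.V η| :=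
  calc |∫ η in S, vDensity α X s η|
      ≤ ∫ η in S, |vDensity α X s η| := abs_integral_le_integral_abs
    _ ≤ ∫ η, |vDensity α X s η| :=
        setIntegral_le_integral (integrable_vDensity hα hX s).abs
          (Eventually.of_forall fun _ => abs_nonneg _)
    _ ≤ ∫ η, |deriv X.V η| :=
        integral_mono (integrable_vDensity hα hX s).abs (integrable_deriv_V hX).abs
          (abs_vDensity_le hα X s)

theorem limUnder_Vsol (hα : α ∈ Icc (0 : ℝ) 1) (hX : inF α X) (s : ℝ) :
    limUnder atTop (Vsol α X s) = ∫ η, vDensity α X s η :=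
  (integrable_vDensity hα hX s).tendsto_integral_Iio_atTop.limUnder_eq

theorem deriv_Vsol_ae_eq (hα : α ∈ Icc (0 : ℝ) 1) (hX : inF α X) (s : ℝ) :
    deriv (Vsol α X s) =ᵐ[volume] vDensity α X s := by
  filter_upwards [(integrable_vDensity hα hX s).ae_hasDerivAt_integral_Iio] with η hη
  exact hη.deriv

noncomputable def usolRate (α : ℝ) (X : LagQuad) (s ξ : ℝ) : ℝ :=
  (1 / 2) * Vsol α X s ξ - (1 / 4) * limUnder atTop (Vsol α X s)

theorem Usol_eq (α : ℝ) (X : LagQuad) (t ξ : ℝ) :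
    Usol α X t ξ = X.U ξ + ∫ s in (0 : ℝ)..t, usolRate α X s ξ :=
  rfl

theorem usolRate_eq (hα : α ∈ Icc (0 : ℝ) 1) (hX : inF α X) (s ξ : ℝ) :
    usolRate α X s ξ =
      (1 / 2) * (∫ η in Iio ξ, vDensity α X s η) - (1 / 4) * ∫ η, vDensity α X s η := by
  rw [usolRate, limUnder_Vsol hα hX s]
  rfl

theorem abs_usolRate_le (hα : α ∈ Icc (0 : ℝ) 1) (hX : inF α X) (s ξ : ℝ) :
    |usolRate α X s ξ| ≤ ∫ η, |deriv X.V η| := by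
  have hV := abs_setIntegral_vDensity_le hα hX s (Iio ξ)
  have hVtot := abs_setIntegral_vDensity_le hα hX s univ
  rw [setIntegral_univ] at hVtot
  rw [usolRate_eq hα hX]
  rw [abs_le] at hV hVtot ⊢
  constructor <;> linarith

theorem stronglyMeasurable_usolRate (hα : α ∈ Icc (0 : ℝ) 1) (hX : inF α X) (ξ : ℝ) :
    StronglyMeasurable fun s => usolRate α X s ξ := by
  simp_rw [usolRate_eq hα hX]
  have hm := (measurable_vDensity α X).stronglyMeasurable
  exact (hm.integral_prod_right' (ν := volume.restrict (Iio ξ))).const_mul _ |>.sub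
    ((hm.integral_prod_right' (ν := volume)).const_mul _)

theorem intervalIntegrable_usolRate (hα : α ∈ Icc (0 : ℝ) 1) (hX : inF α X) (ξ a b : ℝ) :
    IntervalIntegrable (fun s => usolRate α X s ξ) volume a b :=
  (intervalIntegrable_const (c := ∫ η, |deriv X.V η|)).mono_fun
    (stronglyMeasurable_usolRate hα hX ξ).aestronglyMeasurable.restrict
    (Eventually.of_forall fun s => by
      simpa only [Real.norm_eq_abs] using (abs_usolRate_le hα hX s ξ).trans (le_abs_self _))

theorem continuous_Usol (hα : α ∈ Icc (0 : ℝ) 1) (hX : inF α X) (s : ℝ) :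
    Continuous (Usol α X s) := by
  obtain ⟨-, KU, hKU⟩ := hX.2.1
  refine hKU.continuous.add (intervalIntegral.continuous_of_dominated_interval
    (bound := fun _ => ∫ η, |deriv X.V η|) (fun ξ => ?_) (fun ξ => ?_)
    intervalIntegrable_const (Eventually.of_forall fun r _ => ?_))
  · exact (stronglyMeasurable_usolRate hα hX ξ).aestronglyMeasurable
  · exact Eventually.of_forall fun r _ => abs_usolRate_le hα hX r ξ
  · exact continuous_const.mul (integrable_vDensity hα hX r).continuous_integral_Iio
      |>.sub continuous_const

theorem lipschitzWith_Usol_time (hα : α ∈ Icc (0 : ℝ) 1) (hX : inF α X) (ξ : ℝ) :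
    LipschitzWith (∫ η, |deriv X.V η|).toNNReal fun s => Usol α X s ξ := by
  refine LipschitzWith.of_dist_le_mul fun s s' => ?_
  have hsub : Usol α X s ξ - Usol α X s' ξ = ∫ r in s'..s, usolRate α X r ξ :=
    (add_sub_add_left_eq_sub _ _ _).trans (intervalIntegral.integral_interval_sub_left
      (intervalIntegrable_usolRate hα hX ξ 0 s) (intervalIntegrable_usolRate hα hX ξ 0 s'))
  rw [Real.dist_eq, Real.dist_eq, hsub, Real.coe_toNNReal _ (integral_nonneg fun _ => abs_nonneg _)]
  exact intervalIntegral.norm_integral_le_of_norm_le_const (f := fun r => usolRate α X r ξ)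
    fun r _ => abs_usolRate_le hα hX r ξ

theorem measurable_deriv_Usol (hα : α ∈ Icc (0 : ℝ) 1) (hX : inF α X) :
    Measurable fun p : ℝ × ℝ => deriv (Usol α X p.1) p.2 :=
  measurable_deriv_with_param <| continuous_prod_of_continuous_lipschitzWith _ _
    (continuous_Usol hα hX) (lipschitzWith_Usol_time hα hX)

end Solution

section TwoSolutions

variable {α : ℝ} {X₁ X₂ : LagQuad}

/-- `G₁₂(·,s)` with each `∂_ξVᵢ` replaced by its a.e. version `vDensity`; unlike `G₁₂`,
it is jointly measurable in `(s, η)`. -/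
noncomputable def gDensity (α : ℝ) (X₁ X₂ : LagQuad) (s η : ℝ) : ℝ :=
  (OmegaT (tauOf X₁) (tauOf X₂) s (sol α X₁ s) (sol α X₂ s)).indicator
      (fun η => |vDensity α X₁ s η - vDensity α X₂ s η|) η
    + (OmegaT (tauOf X₁) (tauOf X₂) s (sol α X₁ s) (sol α X₂ s))ᶜ.indicator
      (fun η => max (vDensity α X₁ s η) (vDensity α X₂ s η)) η

theorem GfunT_sol_ae_eq (hα : α ∈ Icc (0 : ℝ) 1) (h₁ : inF α X₁) (h₂ : inF α X₂)
    (s : ℝ) :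
    GfunT (tauOf X₁) (tauOf X₂) s (sol α X₁ s) (sol α X₂ s) =ᵐ[volume]
      gDensity α X₁ X₂ s := by
  filter_upwards [deriv_Vsol_ae_eq hα h₁ s, deriv_Vsol_ae_eq hα h₂ s] with η e₁ e₂
  simp only [GfunT, gDensity, Set.indicator_apply, sol, e₁, e₂]

theorem measurableSet_OmegaT_sol (hα : α ∈ Icc (0 : ℝ) 1) (h₁ : inF α X₁)
    (h₂ : inF α X₂) :
    MeasurableSet {p : ℝ × ℝ |
      p.2 ∈ OmegaT (tauOf X₁) (tauOf X₂) p.1 (sol α X₁ p.1) (sol α X₂ p.1)} := by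
  have hτ₁ : Measurable fun p : ℝ × ℝ => tauOf X₁ p.2 :=
    (measurable_tauOf X₁).comp measurable_snd
  have hτ₂ : Measurable fun p : ℝ × ℝ => tauOf X₂ p.2 :=
    (measurable_tauOf X₂).comp measurable_snd
  exact ((measurableSet_le measurable_const (measurable_deriv_Usol hα h₁)).inter
      (measurableSet_le measurable_const (measurable_deriv_Usol hα h₂))).union
    ((measurableSet_lt (ENNReal.measurable_ofReal.comp measurable_fst) hτ₁).inter
      ((measurableSet_eq_fun hτ₁ hτ₂).inter (measurableSet_lt hτ₂ measurable_const)))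

theorem measurable_gDensity (hα : α ∈ Icc (0 : ℝ) 1) (h₁ : inF α X₁)
    (h₂ : inF α X₂) :
    Measurable fun p : ℝ × ℝ => gDensity α X₁ X₂ p.1 p.2 := by
  have hΩ := measurableSet_OmegaT_sol hα h₁ h₂
  exact (((measurable_vDensity α X₁).sub (measurable_vDensity α X₂)).abs.indicator hΩ).add
    (((measurable_vDensity α X₁).max (measurable_vDensity α X₂)).indicator hΩ.compl)

theorem abs_gDensity_le (hα : α ∈ Icc (0 : ℝ) 1) (X₁ X₂ : LagQuad) (s η : ℝ) :
    |gDensity α X₁ X₂ s η| ≤ |deriv X₁.V η| + |deriv X₂.V η| := by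
  have hv₁ := abs_vDensity_le hα X₁ s η
  have hv₂ := abs_vDensity_le hα X₂ s η
  by_cases h : η ∈ OmegaT (tauOf X₁) (tauOf X₂) s (sol α X₁ s) (sol α X₂ s)
  · simp only [gDensity, Set.indicator_of_mem h,
      Set.indicator_of_notMem (show η ∉ _ᶜ from not_not_intro h), add_zero, abs_abs]
    linarith [abs_sub (vDensity α X₁ s η) (vDensity α X₂ s η)]
  · simp only [gDensity, Set.indicator_of_notMem h, Set.indicator_of_mem (mem_compl h), zero_add]
    exact (abs_max_le_max_abs_abs).trans (max_le_add_of_nonneg (abs_nonneg _) (abs_nonneg _))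
      |>.trans (add_le_add hv₁ hv₂)

theorem integrable_gDensity (hα : α ∈ Icc (0 : ℝ) 1) (h₁ : inF α X₁) (h₂ : inF α X₂)
    (s : ℝ) :
    Integrable (gDensity α X₁ X₂ s) :=
  ((integrable_deriv_V h₁).abs.add (integrable_deriv_V h₂).abs).mono'
    ((measurable_gDensity hα h₁ h₂).comp measurable_prodMk_left).aestronglyMeasurable
    (Eventually.of_forall (abs_gDensity_le hα X₁ X₂ s))

theorem abs_vDensity_sub_le_gDensity (hα : α ∈ Icc (0 : ℝ) 1) (h₁ : inF α X₁)
    (h₂ : inF α X₂) (s : ℝ) :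
    ∀ᵐ η, |vDensity α X₁ s η - vDensity α X₂ s η| ≤ gDensity α X₁ X₂ s η := by
  filter_upwards [vDensity_nonneg hα h₁ s, vDensity_nonneg hα h₂ s] with η hv₁ hv₂
  by_cases h : η ∈ OmegaT (tauOf X₁) (tauOf X₂) s (sol α X₁ s) (sol α X₂ s)
  · simp [gDensity, h]
  · simp only [gDensity, Set.indicator_of_notMem h, Set.indicator_of_mem (mem_compl h), zero_add]
    have hmax₁ := le_max_left (vDensity α X₁ s η) (vDensity α X₂ s η)
    have hmax₂ := le_max_right (vDensity α X₁ s η) (vDensity α X₂ s η)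
    exact abs_sub_le_iff.2 ⟨by linarith, by linarith⟩

theorem nrm_one_GfunT_sol (hα : α ∈ Icc (0 : ℝ) 1) (h₁ : inF α X₁) (h₂ : inF α X₂)
    (s : ℝ) :
    nrm 1 (GfunT (tauOf X₁) (tauOf X₂) s (sol α X₁ s) (sol α X₂ s))
      = ∫ η, gDensity α X₁ X₂ s η := by
  have hnonneg : 0 ≤ᵐ[volume] gDensity α X₁ X₂ s := by
    filter_upwards [abs_vDensity_sub_le_gDensity hα h₁ h₂ s] with η h
    exact (abs_nonneg _).trans h
  rw [nrm, eLpNorm_congr_ae (GfunT_sol_ae_eq hα h₁ h₂ s), eLpNorm_one_eq_lintegral_enorm,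
    integral_eq_lintegral_of_nonneg_ae hnonneg
      (integrable_gDensity hα h₁ h₂ s).aestronglyMeasurable]
  congr 1
  exact lintegral_congr_ae (hnonneg.mono fun η h => Real.enorm_eq_ofReal h)

theorem abs_usolRate_sub_le (hα : α ∈ Icc (0 : ℝ) 1) (h₁ : inF α X₁) (h₂ : inF α X₂)
    (s ξ : ℝ) :
    |usolRate α X₁ s ξ - usolRate α X₂ s ξ| ≤
      (1 / 4) * ∫ η, gDensity α X₁ X₂ s η := by
  have hv₁ := integrable_vDensity hα h₁ s
  have hv₂ := integrable_vDensity hα h₂ s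
  calc |usolRate α X₁ s ξ - usolRate α X₂ s ξ|
      = |(1 / 2) * (∫ η in Iio ξ, vDensity α X₁ s η - vDensity α X₂ s η)
          - (1 / 4) * ∫ η, vDensity α X₁ s η - vDensity α X₂ s η| := by
        rw [usolRate_eq hα h₁, usolRate_eq hα h₂, integral_sub hv₁ hv₂,
          integral_sub hv₁.integrableOn hv₂.integrableOn]
        ring_nf
    _ ≤ (1 / 4) * ∫ η, |vDensity α X₁ s η - vDensity α X₂ s η| :=
        (hv₁.sub hv₂).abs_half_integral_Iio_sub_quarter_integral_le ξ
    _ ≤ (1 / 4) * ∫ η, gDensity α X₁ X₂ s η := by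
        refine mul_le_mul_of_nonneg_left ?_ (by norm_num)
        exact integral_mono_ae (hv₁.sub hv₂).abs (integrable_gDensity hα h₁ h₂ s)
          (abs_vDensity_sub_le_gDensity hα h₁ h₂ s)

theorem intervalIntegrable_integral_gDensity (hα : α ∈ Icc (0 : ℝ) 1) (h₁ : inF α X₁)
    (h₂ : inF α X₂) (a b : ℝ) :
    IntervalIntegrable (fun s => ∫ η, gDensity α X₁ X₂ s η) volume a b := by
  refine (intervalIntegrable_const (c := ∫ η, |deriv X₁.V η| + |deriv X₂.V η|)).mono_fun
    ((measurable_gDensity hα h₁ h₂).stronglyMeasurable.integral_prod_right'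
      (ν := volume)).aestronglyMeasurable.restrict (Eventually.of_forall fun s => ?_)
  simp only [Real.norm_eq_abs]
  refine abs_integral_le_integral_abs.trans (le_trans ?_ (le_abs_self _))
  exact integral_mono (integrable_gDensity hα h₁ h₂ s).abs
    ((integrable_deriv_V h₁).abs.add (integrable_deriv_V h₂).abs)
    (abs_gDensity_le hα X₁ X₂ s)

theorem abs_Usol_sub_sub_le (hα : α ∈ Icc (0 : ℝ) 1) (h₁ : inF α X₁) (h₂ : inF α X₂)
    {t : ℝ} (ht : 0 ≤ t) (ξ : ℝ) :
    |(Usol α X₁ t ξ - Usol α X₂ t ξ) - (Usol α X₁ 0 ξ - Usol α X₂ 0 ξ)|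
      ≤ (1 / 4) * ∫ s in (0 : ℝ)..t, ∫ η, gDensity α X₁ X₂ s η := by
  have hsub : (Usol α X₁ t ξ - Usol α X₂ t ξ) - (Usol α X₁ 0 ξ - Usol α X₂ 0 ξ)
      = ∫ s in (0 : ℝ)..t, usolRate α X₁ s ξ - usolRate α X₂ s ξ := by
    rw [intervalIntegral.integral_sub (intervalIntegrable_usolRate hα h₁ ξ 0 t)
      (intervalIntegrable_usolRate hα h₂ ξ 0 t)]
    simp only [Usol_eq, intervalIntegral.integral_same]
    ring
  rw [hsub, ← intervalIntegral.integral_const_mul]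
  exact intervalIntegral.norm_integral_le_of_norm_le
    (f := fun s => usolRate α X₁ s ξ - usolRate α X₂ s ξ) ht
    (Eventually.of_forall fun s _ => abs_usolRate_sub_le hα h₁ h₂ s ξ)
    ((intervalIntegrable_integral_gDensity hα h₁ h₂ 0 t).const_mul _)

end TwoSolutions

/-- `‖U₁(·,t) − U₂(·,t)‖_{L∞} ≤ ‖U₁(·,0) − U₂(·,0)‖_{L∞}
+ (1/4)·∫₀ᵗ ‖G₁₂(·,s)‖_{L¹} ds` for α-dissipative solutions with data in `F`. -/
theorem statement5 (α : ℝ) (hα : α ∈ Set.Icc (0 : ℝ) 1)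
    (X₁ X₂ : LagQuad) (h₁ : inF α X₁) (h₂ : inF α X₂)
    (t : ℝ) (ht : 0 ≤ t) :
    nrm ⊤ (fun ξ => Usol α X₁ t ξ - Usol α X₂ t ξ) ≤
      nrm ⊤ (fun ξ => Usol α X₁ 0 ξ - Usol α X₂ 0 ξ)
        + (1 / 4) * ∫ s in (0:ℝ)..t,
            nrm 1 (GfunT (tauOf X₁) (tauOf X₂) s (sol α X₁ s) (sol α X₂ s)) := by
  simp_rw [nrm_one_GfunT_sol hα h₁ h₂]
  refine nrm_top_le_add_of_abs_sub_le ?_ (abs_Usol_sub_sub_le hα h₁ h₂ ht)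
  obtain ⟨-, ⟨⟨C₁, hC₁⟩, -⟩, -⟩ := h₁
  obtain ⟨-, ⟨⟨C₂, hC₂⟩, -⟩, -⟩ := h₂
  refine ⟨C₁ + C₂, fun ξ => ?_⟩
  simp only [Usol, intervalIntegral.integral_same, add_zero]
  exact (abs_sub _ _).trans (add_le_add (hC₁ ξ) (hC₂ ξ))
end

section
/- Let f : ℝ → ℝ be an increasing homeomorphism such that f − id and f⁻¹ − id are bounded and Lipschitz, and let y, V, H : ℝ → ℝ be Lipschitz functions with V and H nondecreasing and V', H' ∈ L¹(ℝ). Then the push-forward under y∘f of the measure (V∘f)'(ξ) dξ equals the push-forward under y of the measure V'(ξ) dξ, and likewise with V replaced by H; moreover, the function u defined by u(x) = U(ξ) whenever x = y(ξ) is unchanged when (y,U) is replaced by (y∘f, U∘f). In the paper's notation: if X, X̃ ∈ F satisfy X̃ = X • f for some f ∈ G, then M(X̃) = M(X). -/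
open MeasureTheory Filter Set Real
open scoped ENNReal Classical

/-!
The relabelling `f` is an increasing homeomorphism, since it is a continuous bijection within
bounded distance of the identity. For a nondecreasing Lipschitz `W`, the fundamental theorem of
calculus gives `∫_{(a,b]} W' = W b - W a`, and `f⁻¹ (a, b] = (f⁻¹ a, f⁻¹ b]`; hence `f` pushes
`(W ∘ f)' dξ` forward to `W' dξ`, and composing with `y` gives the claim for `μ` and `ν`. For `u`,
on an interval where `y` is constant we have `y' = 0` a.e., so `U'² = y' V' = 0` a.e. and `U` is
constant there; thus `U` factors through `y`, and `u` does not depend on the chosen preimage.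
-/

open Function
open scoped NNReal Interval

theorem LipschitzWith.absolutelyContinuousOnInterval {g : ℝ → ℝ} {K : ℝ≥0}
    (hg : LipschitzWith K g) (a b : ℝ) : AbsolutelyContinuousOnInterval g a b :=
  hg.lipschitzOnWith.absolutelyContinuousOnInterval

theorem LipschitzWith.of_sub_id {g : ℝ → ℝ} {K : ℝ≥0}
    (hg : LipschitzWith K fun x => g x - x) : LipschitzWith (K + 1) g := by
  simpa using hg.add LipschitzWith.id

theorem strictMono_of_injective_of_bounded_sub_id {f : ℝ → ℝ} (hc : Continuous f)
    (hinj : Injective f) {C : ℝ} (hC : ∀ x, |f x - x| ≤ C) : StrictMono f := by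
  refine (hc.strictMono_of_inj hinj).resolve_right fun hanti => ?_
  set x := max 0 (f 0 + C + 1)
  have hfx : f x ≤ f 0 := hanti.antitone (le_max_left _ _)
  have hx : f 0 + C + 1 ≤ x := le_max_right _ _
  linarith [(abs_le.mp (hC x)).1]

theorem surjective_of_bounded_sub_id {g : ℝ → ℝ} (hc : Continuous g) {C : ℝ}
    (hC : ∀ x, |g x - x| ≤ C) : Surjective g :=
  hc.surjective
    (tendsto_atTop_mono (fun x => by dsimp only [id]; linarith [(abs_le.mp (hC x)).1])
      (tendsto_atTop_add_const_right atTop (-C) tendsto_id))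
    (tendsto_atBot_mono (fun x => by dsimp only [id]; linarith [(abs_le.mp (hC x)).2])
      (tendsto_atBot_add_const_right atBot C tendsto_id))

theorem monotone_of_ae_deriv_nonneg {g : ℝ → ℝ} (hg : ∀ a b, AbsolutelyContinuousOnInterval g a b)
    (hg' : ∀ᵐ x, 0 ≤ deriv g x) : Monotone g := fun a b hab => by
  have := intervalIntegral.integral_nonneg_of_ae hab hg'
  rw [(hg a b).integral_deriv_eq_sub] at this
  linarith

theorem ae_restrict_deriv_eq_zero_of_eq {y : ℝ → ℝ} {a b : ℝ}
    (hy : AbsolutelyContinuousOnInterval y a b) (hy' : ∀ᵐ x, 0 ≤ deriv y x) (hab : y a = y b) :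
    ∀ᵐ x ∂volume.restrict (Ι a b), deriv y x = 0 := by
  have h := hy.integral_deriv_eq_sub
  rw [hab, sub_self, intervalIntegral.integral_eq_zero_iff_of_nonneg_ae (ae_restrict_of_ae hy')
    hy.intervalIntegrable_deriv] at h
  rwa [uIoc_eq_union]

theorem AbsolutelyContinuousOnInterval.eq_of_ae_restrict_deriv_eq_zero {U : ℝ → ℝ} {a b : ℝ}
    (hU : AbsolutelyContinuousOnInterval U a b)
    (hU' : ∀ᵐ x ∂volume.restrict (Ι a b), deriv U x = 0) : U a = U b := by
  have h := hU.integral_deriv_eq_sub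
  rw [intervalIntegral.integral_congr_ae_restrict (g := fun _ => 0) hU',
    intervalIntegral.integral_zero] at h
  linarith

theorem factorsThrough_of_ae_deriv_eq_zero_imp {y U : ℝ → ℝ}
    (hy : ∀ a b, AbsolutelyContinuousOnInterval y a b)
    (hU : ∀ a b, AbsolutelyContinuousOnInterval U a b) (hy' : ∀ᵐ x, 0 ≤ deriv y x)
    (hyU : ∀ᵐ x, deriv y x = 0 → deriv U x = 0) : FactorsThrough U y := fun a b hab =>
  (hU a b).eq_of_ae_restrict_deriv_eq_zero <| by
    filter_upwards [ae_restrict_deriv_eq_zero_of_eq (hy a b) hy' hab, ae_restrict_of_ae hyU]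
      with x hx hxU using hxU hx

theorem withDensity_ofReal_deriv_Ioc {W : ℝ → ℝ} {a b : ℝ}
    (hW : AbsolutelyContinuousOnInterval W a b) (hmono : Monotone W) (hab : a ≤ b) :
    volume.withDensity (fun x => ENNReal.ofReal (deriv W x)) (Ioc a b)
      = ENNReal.ofReal (W b - W a) := by
  rw [withDensity_apply _ measurableSet_Ioc, ← hW.integral_deriv_eq_sub,
    intervalIntegral.integral_of_le hab, ofReal_integral_eq_lintegral_ofReal
      hW.intervalIntegrable_deriv.1 (ae_of_all _ fun _ => hmono.deriv_nonneg)]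

theorem map_withDensity_ofReal_deriv_comp (e : ℝ ≃o ℝ) {W : ℝ → ℝ} (hmono : Monotone W)
    (hW : ∀ a b, AbsolutelyContinuousOnInterval W a b)
    (hWe : ∀ a b, AbsolutelyContinuousOnInterval (W ∘ e) a b) :
    (volume.withDensity fun x => ENNReal.ofReal (deriv (W ∘ e) x)).map e
      = volume.withDensity fun x => ENNReal.ofReal (deriv W x) := by
  have hIoc : ∀ ⦃a b : ℝ⦄, a < b →
      (volume.withDensity fun x => ENNReal.ofReal (deriv (W ∘ e) x)).map e (Ioc a b)
        = ENNReal.ofReal (W b - W a) := fun a b hab => by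
    rw [Measure.map_apply e.continuous.measurable measurableSet_Ioc, e.preimage_Ioc,
      withDensity_ofReal_deriv_Ioc (hWe _ _) (hmono.comp e.monotone)
        (e.symm.monotone hab.le)]
    simp
  refine Measure.ext_of_Ioc' _ _ (fun a b hab => hIoc hab ▸ ENNReal.ofReal_ne_top)
    fun a b hab => ?_
  rw [hIoc hab, withDensity_ofReal_deriv_Ioc (hW a b) hmono hab.le]

theorem map_comp_withDensity_ofReal_deriv_comp (e : ℝ ≃o ℝ) {y W : ℝ → ℝ} (hy : Measurable y)
    (hmono : Monotone W) (hW : ∀ a b, AbsolutelyContinuousOnInterval W a b)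
    (hWe : ∀ a b, AbsolutelyContinuousOnInterval (W ∘ e) a b) :
    (volume.withDensity fun x => ENNReal.ofReal (deriv (W ∘ e) x)).map (y ∘ e)
      = (volume.withDensity fun x => ENNReal.ofReal (deriv W x)).map y := by
  rw [← Measure.map_map hy e.continuous.measurable,
    map_withDensity_ofReal_deriv_comp e hmono hW hWe]

theorem Mu_act_eq {X : LagQuad} {f : ℝ → ℝ} (hy : Surjective X.y) (hf : Surjective f)
    (hU : FactorsThrough X.U X.y) : Mu (act X f) = Mu X := funext fun x =>
  hU ((invFun_eq ((hy.comp hf) x)).trans (invFun_eq (hy x)).symm)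

theorem statement15_general (α : ℝ)
    (X : LagQuad) (hX : inF α X) (f : ℝ → ℝ) (hf : inG f) :
    Mu (act X f) = Mu X ∧ Mmu (act X f) = Mmu X ∧ Mnu (act X f) = Mnu X := by
  obtain ⟨⟨⟨Cy, hCy⟩, Ky, hKy⟩, ⟨-, KU, hKU⟩, ⟨-, KH, hKH⟩, ⟨-, KV, hKV⟩, hy', hH', -, hyVU, hVH,
    -, -⟩ := hX
  obtain ⟨hbij, ⟨⟨Cf, hCf⟩, Kf, hKf⟩, -, -⟩ := hf
  have hy := hKy.of_sub_id
  have hfLip := hKf.of_sub_id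
  obtain ⟨e, rfl⟩ : ∃ e : ℝ ≃o ℝ, ⇑e = f :=
    ⟨(strictMono_of_injective_of_bounded_sub_id hfLip.continuous hbij.1 hCf).orderIsoOfSurjective f
      hbij.2, rfl⟩
  have hUy : FactorsThrough X.U X.y := by
    refine factorsThrough_of_ae_deriv_eq_zero_imp hy.absolutelyContinuousOnInterval
      hKU.absolutelyContinuousOnInterval hy' (hyVU.mono fun _ h hy0 => ?_)
    rw [hy0, zero_mul, eq_comm, sq_eq_zero_iff] at h
    exact h
  have hVmono := monotone_of_ae_deriv_nonneg hKV.absolutelyContinuousOnInterval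
    (hVH.mono fun _ h => h.1)
  have hHmono := monotone_of_ae_deriv_nonneg hKH.absolutelyContinuousOnInterval hH'
  refine ⟨Mu_act_eq (surjective_of_bounded_sub_id hy.continuous hCy) e.surjective hUy, ?_, ?_⟩
  · exact map_comp_withDensity_ofReal_deriv_comp e hy.continuous.measurable hVmono
      hKV.absolutelyContinuousOnInterval (hKV.comp hfLip).absolutelyContinuousOnInterval
  · exact map_comp_withDensity_ofReal_deriv_comp e hy.continuous.measurable hHmono
      hKH.absolutelyContinuousOnInterval (hKH.comp hfLip).absolutelyContinuousOnInterval

/-- relabelling leaves the Eulerian coordinates unchanged: if `X ∈ F` and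
`f ∈ G`, then `M(X • f) = M(X)`, i.e. the velocity `u`, the push-forward measure
`μ = y_#(V' dξ)` and `ν = y_#(H' dξ)` all agree for `X` and `X • f`. -/
theorem statement15 (α : ℝ) (hα : α ∈ Set.Icc (0 : ℝ) 1)
    (X : LagQuad) (hX : inF α X) (f : ℝ → ℝ) (hf : inG f) :
    Mu (act X f) = Mu X ∧ Mmu (act X f) = Mmu X ∧ Mnu (act X f) = Mnu X :=
  statement15_general α X hX f hf
end
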